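/- Let G be a bounded linear operator on H = ℓ²(C_f, ℂ) with adjoint G†, let 𝒜 ⊆ ℤ^d, and let 𝒩 ⊆ ℤ^d be finite. Then the following are equivalent: (i) for all states ρ and ρ' on H, if ρ|_{𝒜+𝒩} = ρ'|_{𝒜+𝒩} then (GρG†)|_𝒜 = (Gρ'G†)|_𝒜; (ii) for every bounded operator B on H localized in 𝒜, the operator G† B G is localized in 𝒜 + 𝒩. -/

import Mathlib

/-!
Splitting a configuration into its parts on `S` and off `S` identifies `H` with
`ℓ²(Rst S) ⊗ ℓ²(Rst Sᶜ)`; `slice S w x` is the component of `x` at `w`. For an operator `M`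
localized in `S` with kernel `m` one has `Tr(ρ M) = Tr(ρ|_S m)`.

(ii) ⇒ (i): for the matrix unit `B = |u'⟩⟨u| ⊗ 1`, which is localized in `𝒜`,
`(GρG†)|_𝒜 (u, u') = Tr(ρ G†BG)`, and since `G†BG` is localized in `𝒜 + 𝒩` this is a function
of `ρ|_{𝒜+𝒩}`.

(i) ⇒ (ii): applied to (normalised) pure states, (i) says that `φ ↦ ⟨φ, G†BGφ⟩` only depends on
the reduction of `|φ⟩⟨φ|` to `𝒜 + 𝒩`. Polarizing over `e_c + σ e_{c'}` shows that
`⟨e_c, G†BG e_{c'}⟩` only depends on `c` and `c'` on `𝒜 + 𝒩` when they agree outside it, and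
vanishes otherwise, because then the reduction of `e_c + σ e_{c'}` does not change with the sign
of `σ`.
-/

open scoped Pointwise ComplexConjugate
open Classical

noncomputable section

variable (d : ℕ) (A : Type) (q : A)

/-- Finite configurations over `ℤ^d`. -/
def Cf : Type := {c : (Fin d → ℤ) → A // {i | c i ≠ q}.Finite}

/-- Restrictions to `S` of finite configurations. -/
def Rst (S : Set (Fin d → ℤ)) : Type := {u : S → A // {i | u i ≠ q}.Finite}

variable {d A q}

def restr (S : Set (Fin d → ℤ)) (c : Cf d A q) : Rst d A q S :=
  ⟨fun i => c.1 i, c.2.preimage Subtype.val_injective.injOn⟩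

def glue {S : Set (Fin d → ℤ)} (u : Rst d A q S) (v : Rst d A q Sᶜ) : Cf d A q :=
  ⟨fun i => if h : i ∈ S then u.1 ⟨i, h⟩ else v.1 ⟨i, h⟩, by
    apply Set.Finite.subset ((u.2.image Subtype.val).union (v.2.image Subtype.val))
    intro i hi
    by_cases h : i ∈ S
    · exact Or.inl ⟨⟨i, h⟩, by simpa [h] using hi, rfl⟩
    · exact Or.inr ⟨⟨i, h⟩, by simpa [h] using hi, rfl⟩⟩

/-- The Hilbert space `ℓ²(C_f, ℂ)`. -/
abbrev Hd (d : ℕ) (A : Type) (q : A) : Type := lp (fun _ : Cf d A q => ℂ) 2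

/-- Canonical basis vector. -/
def e (c : Cf d A q) : Hd d A q := lp.single 2 c 1

/-- A state: countable convex combination of an orthonormal family of pure states. -/
structure State (H : Type) [NormedAddCommGroup H] [InnerProductSpace ℂ H] where
  ψ : ℕ → H
  p : ℕ → ℝ
  nonneg : ∀ k, 0 ≤ p k
  sum_one : HasSum p 1
  ortho : ∀ j k, p j ≠ 0 → p k ≠ 0 → (inner ℂ (ψ j) (ψ k) : ℂ) = if j = k then 1 else 0

/-- Reduction to `S` of the mixture of the family `ψ` with weights `p`. -/
def redFam (p : ℕ → ℝ) (ψ : ℕ → Hd d A q) (S : Set (Fin d → ℤ)) :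
    Rst d A q S → Rst d A q S → ℂ := fun u u' =>
  ∑' k, (p k : ℂ) * ∑' v : Rst d A q Sᶜ, (ψ k) (glue u v) * conj ((ψ k) (glue u' v))

def reduct (ρ : State (Hd d A q)) (S : Set (Fin d → ℤ)) :
    Rst d A q S → Rst d A q S → ℂ := redFam ρ.p ρ.ψ S

def redApply (G : Hd d A q →L[ℂ] Hd d A q) (ρ : State (Hd d A q)) (S : Set (Fin d → ℤ)) :
    Rst d A q S → Rst d A q S → ℂ := redFam ρ.p (fun k => G (ρ.ψ k)) S

/-- `G` is local at `𝒜` with neighbourhood `𝒩`. -/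
def LocalAt (G : Hd d A q →L[ℂ] Hd d A q) (𝒜 𝒩 : Set (Fin d → ℤ)) : Prop :=
  ∀ ρ ρ' : State (Hd d A q), reduct ρ (𝒜 + 𝒩) = reduct ρ' (𝒜 + 𝒩) →
    redApply G ρ 𝒜 = redApply G ρ' 𝒜

/-- `F` is a cellular automaton. -/
def IsCA (F : Cf d A q → Cf d A q) : Prop :=
  ∃ (N : Set (Fin d → ℤ)) (_ : N.Finite) (f : (N → A) → A),
    f (fun _ => q) = q ∧ ∀ c i, (F c).1 i = f (fun n => c.1 (i + n.1))

/-- `F` is reversible. -/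
def Reversible (F : Cf d A q → Cf d A q) : Prop :=
  ∃ NI : Set (Fin d → ℤ), NI.Finite ∧ ∀ x y : Cf d A q, ∀ i : Fin d → ℤ,
    (∀ n ∈ NI, (F x).1 (i + n) = (F y).1 (i + n)) → x.1 i = y.1 i


/-- A bounded operator `B` is localized in `S`. -/
def Localized (B : Hd d A q →L[ℂ] Hd d A q) (S : Set (Fin d → ℤ)) : Prop :=
  ∃ b : Rst d A q S → Rst d A q S → ℂ, ∀ c c' : Cf d A q,
    (inner ℂ (e c) (B (e c')) : ℂ) =
      if ∀ i ∉ S, c.1 i = c'.1 i then b (restr S c) (restr S c') else 0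

open scoped ENNReal InnerProductSpace

section Configurations

variable {S : Set (Fin d → ℤ)}

lemma restr_glue (u : Rst d A q S) (v : Rst d A q Sᶜ) : restr S (glue u v) = u :=
  Subtype.ext <| funext fun i => by simp only [glue, restr, dif_pos i.2]

lemma restr_compl_glue (u : Rst d A q S) (v : Rst d A q Sᶜ) : restr Sᶜ (glue u v) = v :=
  Subtype.ext <| funext fun i => by simp only [glue, restr, dif_neg i.2]

lemma glue_restr (S : Set (Fin d → ℤ)) (c : Cf d A q) : glue (restr S c) (restr Sᶜ c) = c :=
  Subtype.ext <| funext fun i => by simp only [glue, restr]; split <;> rfl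

lemma glue_eq_iff {u : Rst d A q S} {v : Rst d A q Sᶜ} {c : Cf d A q} :
    glue u v = c ↔ u = restr S c ∧ v = restr Sᶜ c := by
  constructor
  · rintro rfl
    exact ⟨(restr_glue u v).symm, (restr_compl_glue u v).symm⟩
  · rintro ⟨rfl, rfl⟩
    exact glue_restr S c

lemma glue_injective (u : Rst d A q S) : Function.Injective (glue (q := q) u) := fun v v' h => by
  rw [← restr_compl_glue u v, h, restr_compl_glue]

lemma restr_compl_eq_iff (S : Set (Fin d → ℤ)) (c c' : Cf d A q) :
    restr Sᶜ c = restr Sᶜ c' ↔ ∀ i ∉ S, c.1 i = c'.1 i :=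
  ⟨fun h i hi => congrFun (congrArg Subtype.val h) ⟨i, hi⟩,
    fun h => Subtype.ext <| funext fun i => h i.1 i.2⟩

variable (S) in
def glueEquiv : Rst d A q S × Rst d A q Sᶜ ≃ Cf d A q where
  toFun p := glue p.1 p.2
  invFun c := (restr S c, restr Sᶜ c)
  left_inv p := by simp only [restr_glue, restr_compl_glue]
  right_inv := glue_restr S

def Rst.quiescent (S : Set (Fin d → ℤ)) : Rst d A q S := ⟨fun _ => q, by simp⟩

end Configurations

lemma e_apply (c c' : Cf d A q) : (e (q := q) c) c' = if c' = c then 1 else 0 := by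
  simp [e, lp.single_apply, Pi.single_apply]

lemma inner_e_left (c : Cf d A q) (x : Hd d A q) : ⟪e c, x⟫_ℂ = x c := by
  simp [e, lp.inner_single_left]

section Slices

variable {S : Set (Fin d → ℤ)}

lemma summable_norm_sq_comp_glue (w : Rst d A q S) (x : Hd d A q) :
    Summable fun v => ‖x (glue w v)‖ ^ (2 : ℝ≥0∞).toReal :=
  ((lp.memℓp x).summable (by norm_num)).comp_injective (glue_injective w)

lemma tsum_norm_sq_comp_glue_le (w : Rst d A q S) (x : Hd d A q) :
    ∑' v, ‖x (glue w v)‖ ^ (2 : ℝ≥0∞).toReal ≤ ‖x‖ ^ (2 : ℝ≥0∞).toReal := by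
  rw [lp.norm_rpow_eq_tsum (by norm_num)]
  exact tsum_comp_le_tsum_of_inj ((lp.memℓp x).summable (by norm_num)) (fun _ => by positivity)
    (glue_injective w)

variable (S) in
def slice (w : Rst d A q S) : Hd d A q →L[ℂ] lp (fun _ : Rst d A q Sᶜ => ℂ) 2 :=
  LinearMap.mkContinuous
    { toFun := fun x => ⟨fun v => x (glue w v), memℓp_gen (summable_norm_sq_comp_glue w x)⟩
      map_add' := fun _ _ => rfl
      map_smul' := fun _ _ => rfl }
    1 fun x => by
      rw [one_mul]
      exact lp.norm_le_of_tsum_le (by norm_num) (norm_nonneg x) (tsum_norm_sq_comp_glue_le w x)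

@[simp]
lemma slice_apply (w : Rst d A q S) (x : Hd d A q) (v : Rst d A q Sᶜ) :
    slice S w x v = x (glue w v) := rfl

lemma slice_e (w : Rst d A q S) (c : Cf d A q) :
    slice S w (e c) = if restr S c = w then lp.single 2 (restr Sᶜ c) 1 else 0 := by
  ext v
  rw [slice_apply, e_apply, glue_eq_iff]
  split_ifs <;> simp_all [lp.single_apply, eq_comm]

lemma hasSum_inner_slice (x y : Hd d A q) :
    HasSum (fun w => ⟪slice S w x, slice S w y⟫_ℂ) ⟪x, y⟫_ℂ :=
  ((glueEquiv S).hasSum_iff.2 (lp.hasSum_inner x y)).prod_fiberwise fun w =>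
    lp.hasSum_inner (slice S w x) (slice S w y)

lemma hasSum_norm_slice_sq (x : Hd d A q) :
    HasSum (fun w => ‖slice S w x‖ ^ 2) (‖x‖ ^ 2) := by
  have h := hasSum_inner_slice (S := S) x x
  simp only [inner_self_eq_norm_sq_to_K] at h
  exact_mod_cast h

lemma norm_inner_slice_le (w : Rst d A q S) (x y : Hd d A q) :
    ‖⟪slice S w x, slice S w y⟫_ℂ‖ ≤ (‖slice S w x‖ ^ 2 + ‖slice S w y‖ ^ 2) / 2 := by
  have := two_mul_le_add_sq ‖slice S w x‖ ‖slice S w y‖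
  linarith [norm_inner_le_norm (𝕜 := ℂ) (slice S w x) (slice S w y)]

lemma summable_norm_inner_slice (x y : Hd d A q) :
    Summable fun w => ‖⟪slice S w x, slice S w y⟫_ℂ‖ :=
  .of_nonneg_of_le (fun _ => norm_nonneg _) (fun w => norm_inner_slice_le w x y)
    (((hasSum_norm_slice_sq x).add (hasSum_norm_slice_sq y)).div_const 2).summable

lemma tsum_norm_inner_slice_le (x y : Hd d A q) :
    ∑' w, ‖⟪slice S w x, slice S w y⟫_ℂ‖ ≤ (‖x‖ ^ 2 + ‖y‖ ^ 2) / 2 :=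
  hasSum_le (fun w => norm_inner_slice_le w x y) (summable_norm_inner_slice x y).hasSum
    (((hasSum_norm_slice_sq x).add (hasSum_norm_slice_sq y)).div_const 2)

lemma norm_slice_le_one (w : Rst d A q S) : ‖slice S w‖ ≤ 1 :=
  LinearMap.mkContinuous_norm_le _ zero_le_one _

lemma norm_apply_adjoint_slice_le (M : Hd d A q →L[ℂ] Hd d A q) (w : Rst d A q S)
    (x : Hd d A q) : ‖M ((slice S w).adjoint (slice S w x))‖ ≤ ‖M‖ * ‖x‖ := by
  refine (M.le_opNorm _).trans (mul_le_mul_of_nonneg_left ?_ (norm_nonneg M))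
  calc ‖(slice S w).adjoint (slice S w x)‖ ≤ ‖(slice S w).adjoint‖ * (‖slice S w‖ * ‖x‖) :=
        ((slice S w).adjoint.le_opNorm _).trans (by gcongr; exact (slice S w).le_opNorm x)
    _ ≤ 1 * (1 * ‖x‖) := by
        rw [LinearIsometryEquiv.norm_map]
        gcongr <;> exact norm_slice_le_one w
    _ = ‖x‖ := by ring

end Slices

/-- The reduction `(|x⟩⟨y|)|_S`. -/
def partialTrace (S : Set (Fin d → ℤ)) (x y : Hd d A q) (w w' : Rst d A q S) : ℂ :=
  ⟪slice S w' y, slice S w x⟫_ℂ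

section PartialTrace

variable {S : Set (Fin d → ℤ)}

lemma partialTrace_apply (x y : Hd d A q) (w w' : Rst d A q S) :
    partialTrace S x y w w' = ∑' v, x (glue w v) * conj (y (glue w' v)) := by
  simp only [partialTrace, lp.inner_eq_tsum, slice_apply, RCLike.inner_apply]

lemma redFam_eq_tsum_partialTrace (p : ℕ → ℝ) (ψ : ℕ → Hd d A q) (w w' : Rst d A q S) :
    redFam p ψ S w w' = ∑' k, (p k : ℂ) * partialTrace S (ψ k) (ψ k) w w' := by
  simp only [redFam, partialTrace_apply]

lemma partialTrace_e (a b : Cf d A q) (w w' : Rst d A q S) :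
    partialTrace S (e a) (e b) w w' =
      if restr S a = w ∧ restr S b = w' ∧ restr Sᶜ a = restr Sᶜ b then 1 else 0 := by
  simp only [partialTrace, slice_e]
  split_ifs <;> simp_all [lp.inner_single_left, lp.single_apply, eq_comm]

lemma partialTrace_add_smul_congr {x y x' y' : Hd d A q}
    (hxx : partialTrace S x x = partialTrace S x' x')
    (hxy : partialTrace S x y = partialTrace S x' y')
    (hyx : partialTrace S y x = partialTrace S y' x')
    (hyy : partialTrace S y y = partialTrace S y' y') (σ : ℂ) :
    partialTrace S (x + σ • y) (x + σ • y) = partialTrace S (x' + σ • y') (x' + σ • y') := by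
  funext w w'
  have := congrFun₂ hxx w w'
  have := congrFun₂ hxy w w'
  have := congrFun₂ hyx w w'
  have := congrFun₂ hyy w w'
  simp_all only [partialTrace, map_add, map_smul, inner_add_left, inner_add_right,
    inner_smul_left, inner_smul_right]

lemma partialTrace_smul_left (a : ℂ) (x y : Hd d A q) (w w' : Rst d A q S) :
    partialTrace S (a • x) y w w' = a * partialTrace S x y w w' := by
  simp only [partialTrace, map_smul, inner_smul_right]

lemma partialTrace_smul_right (a : ℂ) (x y : Hd d A q) (w w' : Rst d A q S) :
    partialTrace S x (a • y) w w' = conj a * partialTrace S x y w w' := by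
  simp only [partialTrace, map_smul, inner_smul_left]

lemma norm_eq_of_partialTrace_eq {x x' : Hd d A q}
    (h : partialTrace S x x = partialTrace S x' x') : ‖x‖ = ‖x'‖ := by
  have hinner : ⟪x, x⟫_ℂ = ⟪x', x'⟫_ℂ := by
    rw [← (hasSum_inner_slice (S := S) x x).tsum_eq, ← (hasSum_inner_slice (S := S) x' x').tsum_eq]
    exact tsum_congr fun w => congrFun₂ h w w
  rw [← sq_eq_sq₀ (norm_nonneg _) (norm_nonneg _), ← inner_self_eq_norm_sq (𝕜 := ℂ),
    ← inner_self_eq_norm_sq (𝕜 := ℂ), hinner]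

end PartialTrace

def IsLocalizedWith (M : Hd d A q →L[ℂ] Hd d A q) (S : Set (Fin d → ℤ))
    (m : Rst d A q S → Rst d A q S → ℂ) : Prop :=
  ∀ c c' : Cf d A q, ⟪e c, M (e c')⟫_ℂ =
    if ∀ i ∉ S, c.1 i = c'.1 i then m (restr S c) (restr S c') else 0

namespace IsLocalizedWith

variable {S : Set (Fin d → ℤ)} {M : Hd d A q →L[ℂ] Hd d A q} {m : Rst d A q S → Rst d A q S → ℂ}

lemma localized (hM : IsLocalizedWith M S m) : Localized M S := ⟨m, hM⟩

lemma inner_e_glue (hM : IsLocalizedWith M S m) (w w' : Rst d A q S) (v v' : Rst d A q Sᶜ) :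
    ⟪e (glue w v), M (e (glue w' v'))⟫_ℂ = if v = v' then m w w' else 0 := by
  rw [hM, ← restr_compl_eq_iff, restr_glue, restr_glue, restr_compl_glue, restr_compl_glue]

lemma slice_adjoint_e (hM : IsLocalizedWith M S m) (w w' : Rst d A q S) (v : Rst d A q Sᶜ) :
    slice S w' (M.adjoint (e (glue w v))) = lp.single 2 v (conj (m w w')) := by
  ext v'
  rw [slice_apply, ← inner_e_left, ContinuousLinearMap.adjoint_inner_right, ← inner_conj_symm,
    hM.inner_e_glue]
  split_ifs with h <;> simp [lp.single_apply, h]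

lemma slice_apply_adjoint (hM : IsLocalizedWith M S m) (w w' : Rst d A q S)
    (z : lp (fun _ : Rst d A q Sᶜ => ℂ) 2) :
    slice S w (M ((slice S w').adjoint z)) = m w w' • z := by
  ext v
  rw [slice_apply, ← inner_e_left, ← ContinuousLinearMap.adjoint_inner_left,
    ContinuousLinearMap.adjoint_inner_right, hM.slice_adjoint_e, lp.inner_single_left]
  simp [mul_comm]

lemma inner_slice_adjoint (hM : IsLocalizedWith M S m) (w' : Rst d A q S) (x : Hd d A q)
    (z : lp (fun _ : Rst d A q Sᶜ => ℂ) 2) :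
    ⟪slice S w' (M.adjoint x), z⟫_ℂ = ∑' w, m w w' * ⟪slice S w x, z⟫_ℂ := by
  rw [← ContinuousLinearMap.adjoint_inner_right, ContinuousLinearMap.adjoint_inner_left,
    ← (hasSum_inner_slice (S := S) x _).tsum_eq]
  simp only [hM.slice_apply_adjoint, inner_smul_right]

lemma inner_eq_tsum_partialTrace (hM : IsLocalizedWith M S m) (x y : Hd d A q) :
    ⟪x, M y⟫_ℂ = ∑' w', ∑' w, m w w' * partialTrace S y x w' w := by
  rw [← ContinuousLinearMap.adjoint_inner_left, ← (hasSum_inner_slice (S := S) _ _).tsum_eq]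
  simp only [hM.inner_slice_adjoint, partialTrace]

end IsLocalizedWith

section States

variable {H : Type} [NormedAddCommGroup H] [InnerProductSpace ℂ H]

lemma State.norm_ψ (ρ : State H) {k : ℕ} (hk : ρ.p k ≠ 0) : ‖ρ.ψ k‖ = 1 := by
  have h := ρ.ortho k k hk hk
  rw [if_pos rfl] at h
  have hsq : ‖ρ.ψ k‖ ^ 2 = 1 := by rw [← inner_self_eq_norm_sq (𝕜 := ℂ), h, RCLike.one_re]
  exact (pow_eq_one_iff_of_nonneg (norm_nonneg _) two_ne_zero).1 hsq

def pureState (φ : H) (hφ : ‖φ‖ = 1) : State H where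
  ψ _ := φ
  p k := if k = 0 then 1 else 0
  nonneg k := by split <;> norm_num
  sum_one := hasSum_ite_eq 0 1
  ortho j k hj hk := by
    obtain rfl : j = 0 := by by_contra h; exact hj (if_neg h)
    obtain rfl : k = 0 := by by_contra h; exact hk (if_neg h)
    simp [inner_self_eq_norm_sq_to_K, hφ]

end States

lemma redFam_ite_zero (x : Hd d A q) (S : Set (Fin d → ℤ)) :
    redFam (fun k => if k = 0 then 1 else 0) (fun _ => x) S = partialTrace S x x := by
  funext w w'
  rw [redFam_eq_tsum_partialTrace, tsum_eq_single 0 fun k hk => by simp [hk]]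
  simp

lemma reduct_pureState (φ : Hd d A q) (hφ : ‖φ‖ = 1) (S : Set (Fin d → ℤ)) :
    reduct (pureState φ hφ) S = partialTrace S φ φ :=
  redFam_ite_zero φ S

lemma redApply_pureState (G : Hd d A q →L[ℂ] Hd d A q) (φ : Hd d A q) (hφ : ‖φ‖ = 1)
    (S : Set (Fin d → ℤ)) : redApply G (pureState φ hφ) S = partialTrace S (G φ) (G φ) :=
  redFam_ite_zero (G φ) S

lemma tsum_mul_tsum_comm_of_tsum_norm_le {ι : Type*} {p : ℕ → ℝ} (hp0 : ∀ k, 0 ≤ p k)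
    (hp : Summable p) {f : ℕ → ι → ℂ} {C : ℝ}
    (hf : ∀ k, p k ≠ 0 → Summable (fun i => ‖f k i‖) ∧ ∑' i, ‖f k i‖ ≤ C) :
    ∑' k, (p k : ℂ) * ∑' i, f k i = ∑' i, ∑' k, (p k : ℂ) * f k i := by
  have hnorm : ∀ k i, ‖(p k : ℂ) * f k i‖ = p k * ‖f k i‖ := fun k i => by
    rw [norm_mul, Complex.norm_real, Real.norm_of_nonneg (hp0 k)]
  have hsum : Summable (Function.uncurry fun k i => (p k : ℂ) * f k i) := by
    refine .of_norm ((summable_prod_of_nonneg fun _ => norm_nonneg _).2 ⟨fun k => ?_, ?_⟩)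
    · by_cases hk : p k = 0
      · simp [hk, summable_zero]
      · simpa only [Function.uncurry_apply_pair, hnorm] using (hf k hk).1.mul_left (p k)
    · refine .of_nonneg_of_le (fun k => tsum_nonneg fun _ => norm_nonneg _) (fun k => ?_)
        (hp.mul_right C)
      simp only [Function.uncurry_apply_pair, hnorm, tsum_mul_left]
      by_cases hk : p k = 0
      · simp [hk]
      · exact mul_le_mul_of_nonneg_left (hf k hk).2 (hp0 k)
  simp_rw [← tsum_mul_left]
  exact hsum.tsum_comm.symm

lemma IsLocalizedWith.tsum_mul_inner_eq {S : Set (Fin d → ℤ)} {M : Hd d A q →L[ℂ] Hd d A q}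
    {m : Rst d A q S → Rst d A q S → ℂ} (hM : IsLocalizedWith M S m) (ρ : State (Hd d A q)) :
    ∑' k, (ρ.p k : ℂ) * ⟪ρ.ψ k, M (ρ.ψ k)⟫_ℂ = ∑' w', ∑' w, m w w' * reduct ρ S w' w := by
  calc ∑' k, (ρ.p k : ℂ) * ⟪ρ.ψ k, M (ρ.ψ k)⟫_ℂ
      = ∑' k, (ρ.p k : ℂ) * ∑' w', ⟪slice S w' (M.adjoint (ρ.ψ k)), slice S w' (ρ.ψ k)⟫_ℂ := by
        simp only [(hasSum_inner_slice _ _).tsum_eq, ContinuousLinearMap.adjoint_inner_left]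
    _ = ∑' w', ∑' k, (ρ.p k : ℂ) * ⟪slice S w' (M.adjoint (ρ.ψ k)), slice S w' (ρ.ψ k)⟫_ℂ := by
        refine tsum_mul_tsum_comm_of_tsum_norm_le ρ.nonneg ρ.sum_one.summable
          (C := (‖M.adjoint‖ ^ 2 + 1) / 2) fun k hk => ⟨summable_norm_inner_slice _ _, ?_⟩
        have h := (M.adjoint.le_opNorm (ρ.ψ k)).trans_eq (by rw [ρ.norm_ψ hk, mul_one])
        refine (tsum_norm_inner_slice_le _ _).trans ?_
        rw [ρ.norm_ψ hk, one_pow]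
        gcongr
    _ = ∑' w', ∑' k, (ρ.p k : ℂ) * ∑' w,
          ⟪slice S w (ρ.ψ k), slice S w (M ((slice S w').adjoint (slice S w' (ρ.ψ k))))⟫_ℂ := by
        simp only [hM.inner_slice_adjoint, hM.slice_apply_adjoint, inner_smul_right]
    _ = ∑' w', ∑' w, ∑' k, (ρ.p k : ℂ) *
          ⟪slice S w (ρ.ψ k), slice S w (M ((slice S w').adjoint (slice S w' (ρ.ψ k))))⟫_ℂ := by
        refine tsum_congr fun w' => tsum_mul_tsum_comm_of_tsum_norm_le ρ.nonneg
          ρ.sum_one.summable (C := (1 + ‖M‖ ^ 2) / 2) fun k hk =>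
            ⟨summable_norm_inner_slice _ _, ?_⟩
        have h := (norm_apply_adjoint_slice_le M w' (ρ.ψ k)).trans_eq (by rw [ρ.norm_ψ hk, mul_one])
        refine (tsum_norm_inner_slice_le _ _).trans ?_
        rw [ρ.norm_ψ hk, one_pow]
        gcongr
    _ = ∑' w', ∑' w, m w w' * reduct ρ S w' w := by
        simp only [hM.slice_apply_adjoint, inner_smul_right, reduct, redFam_eq_tsum_partialTrace,
          partialTrace, ← tsum_mul_left, mul_left_comm]

/-- The operator `|u'⟩⟨u| ⊗ 1` on `H ≅ ℓ²(Rst 𝒜) ⊗ ℓ²(Rst 𝒜ᶜ)`. -/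
def matrixUnit (𝒜 : Set (Fin d → ℤ)) (u u' : Rst d A q 𝒜) : Hd d A q →L[ℂ] Hd d A q :=
  (slice 𝒜 u').adjoint.comp (slice 𝒜 u)

section MatrixUnit

variable {𝒜 : Set (Fin d → ℤ)}

lemma inner_matrixUnit (u u' : Rst d A q 𝒜) (x y : Hd d A q) :
    ⟪x, matrixUnit 𝒜 u u' y⟫_ℂ = partialTrace 𝒜 y x u u' := by
  rw [matrixUnit, ContinuousLinearMap.comp_apply, ContinuousLinearMap.adjoint_inner_right,
    partialTrace]

lemma isLocalizedWith_matrixUnit (u u' : Rst d A q 𝒜) :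
    IsLocalizedWith (matrixUnit 𝒜 u u') 𝒜 fun w w' => if w = u' ∧ w' = u then 1 else 0 := by
  intro c c'
  rw [inner_matrixUnit, partialTrace_e, ← restr_compl_eq_iff]
  by_cases h : restr 𝒜ᶜ c = restr 𝒜ᶜ c' <;> simp [h, eq_comm, and_comm]

end MatrixUnit

lemma redApply_eq_of_reduct_eq {S 𝒜 : Set (Fin d → ℤ)} {G : Hd d A q →L[ℂ] Hd d A q}
    (hG : ∀ B : Hd d A q →L[ℂ] Hd d A q, Localized B 𝒜 →
      Localized (G.adjoint.comp (B.comp G)) S)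
    {ρ ρ' : State (Hd d A q)} (h : reduct ρ S = reduct ρ' S) :
    redApply G ρ 𝒜 = redApply G ρ' 𝒜 := by
  funext u u'
  obtain ⟨m, hm⟩ := hG _ (isLocalizedWith_matrixUnit u u').localized
  have key (ρ : State (Hd d A q)) :
      redApply G ρ 𝒜 u u' = ∑' w', ∑' w, m w w' * reduct ρ S w' w := by
    rw [← IsLocalizedWith.tsum_mul_inner_eq hm, redApply, redFam_eq_tsum_partialTrace]
    simp only [ContinuousLinearMap.comp_apply, ContinuousLinearMap.adjoint_inner_right,
      inner_matrixUnit]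
  rw [key, key, h]

lemma inner_map_eq_of_forall_inner_map_add_smul_eq {V : Type*} [SeminormedAddCommGroup V]
    [InnerProductSpace ℂ V] (T : V →ₗ[ℂ] V) {x y x' y' : V}
    (h : ∀ σ : ℂ, ⟪x + σ • y, T (x + σ • y)⟫_ℂ = ⟪x' + σ • y', T (x' + σ • y')⟫_ℂ) :
    ⟪x, T y⟫_ℂ = ⟪x', T y'⟫_ℂ := by
  have h₁ := h 1
  have h₂ := h (-1)
  have h₃ := h Complex.I
  have h₄ := h (-Complex.I)
  simp only [map_add, map_smul, inner_add_left, inner_add_right, inner_smul_left,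
    inner_smul_right, map_neg, map_one, Complex.conj_I, one_mul, neg_mul, neg_neg] at h₁ h₂ h₃ h₄
  linear_combination (norm := ring_nf) (h₁ - h₂ - Complex.I * (h₃ - h₄)) / 4
  simp [Complex.I_sq]

section Forward

variable {S 𝒜 : Set (Fin d → ℤ)} {G B : Hd d A q →L[ℂ] Hd d A q}
  {b : Rst d A q 𝒜 → Rst d A q 𝒜 → ℂ}

lemma inner_adjoint_conj_self_eq_of_partialTrace_eq
    (hG : ∀ ρ ρ' : State (Hd d A q), reduct ρ S = reduct ρ' S → redApply G ρ 𝒜 = redApply G ρ' 𝒜)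
    (hB : IsLocalizedWith B 𝒜 b) {φ φ' : Hd d A q} (h : partialTrace S φ φ = partialTrace S φ' φ') :
    ⟪φ, G.adjoint.comp (B.comp G) φ⟫_ℂ = ⟪φ', G.adjoint.comp (B.comp G) φ'⟫_ℂ := by
  simp only [ContinuousLinearMap.comp_apply, ContinuousLinearMap.adjoint_inner_right]
  have hn := norm_eq_of_partialTrace_eq h
  rcases eq_or_ne ‖φ‖ 0 with h0 | h0
  · obtain rfl : φ = 0 := norm_eq_zero.1 h0
    obtain rfl : φ' = 0 := norm_eq_zero.1 (hn ▸ h0)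
    rfl
  -- normalize, so that `φ` and `φ'` become pure states
  set r : ℂ := ((‖φ‖⁻¹ : ℝ) : ℂ)
  have hr : r * conj r ≠ 0 := by simp [r, h0]
  have hunit (x : Hd d A q) (hx : ‖x‖ = ‖φ‖) : ‖r • x‖ = 1 := by
    simp [r, norm_smul, hx, h0]
  have hred := hG (pureState _ (hunit φ rfl)) (pureState _ (hunit φ' hn.symm)) (by
    rw [reduct_pureState, reduct_pureState]
    funext w w'
    simp only [partialTrace_smul_left, partialTrace_smul_right, h])
  rw [redApply_pureState, redApply_pureState] at hred
  have hquad := (hB.inner_eq_tsum_partialTrace _ _).trans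
    (hred ▸ (hB.inner_eq_tsum_partialTrace (G (r • φ')) (G (r • φ'))).symm)
  exact mul_left_cancel₀ hr (by
    simpa only [map_smul, inner_smul_left, inner_smul_right, ← mul_assoc] using hquad)

lemma isLocalizedWith_adjoint_conj
    (hG : ∀ ρ ρ' : State (Hd d A q), reduct ρ S = reduct ρ' S → redApply G ρ 𝒜 = redApply G ρ' 𝒜)
    (hB : IsLocalizedWith B 𝒜 b) :
    IsLocalizedWith (G.adjoint.comp (B.comp G)) S fun w w' =>
      ⟪e (glue w (Rst.quiescent Sᶜ)),
        G.adjoint.comp (B.comp G) (e (glue w' (Rst.quiescent Sᶜ)))⟫_ℂ := by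
  have polarize {x y x' y' : Hd d A q} (h : ∀ σ : ℂ, partialTrace S (x + σ • y) (x + σ • y) =
      partialTrace S (x' + σ • y') (x' + σ • y')) :
      ⟪x, G.adjoint.comp (B.comp G) y⟫_ℂ = ⟪x', G.adjoint.comp (B.comp G) y'⟫_ℂ :=
    inner_map_eq_of_forall_inner_map_add_smul_eq (G.adjoint.comp (B.comp G)).toLinearMap
      fun σ => inner_adjoint_conj_self_eq_of_partialTrace_eq hG hB (h σ)
  intro c c'
  rw [← restr_compl_eq_iff]
  split_ifs with hcc'
  · refine polarize (partialTrace_add_smul_congr ?_ ?_ ?_ ?_) <;> funext w w' <;>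
      simp [partialTrace_e, restr_glue, restr_compl_glue, hcc']
  · -- the reductions of `e c ± σ e c'` coincide, so the polarization of `⟪e c, _ e c'⟫` cancels
    have h := polarize (x := e c) (y := e c') (x' := e c) (y' := (-1 : ℂ) • e c')
      (partialTrace_add_smul_congr rfl ?_ ?_ ?_)
    · simpa only [map_smul, inner_smul_right, neg_one_mul, CharZero.eq_neg_self_iff] using h
    all_goals
      funext w w'
      simp only [partialTrace_smul_left, partialTrace_smul_right]
      simp [partialTrace_e, hcc', Ne.symm hcc']

end Forward

theorem localAt_iff_adjoint_conj_localized_general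
    {d : ℕ} {A : Type} {q : A}
    (G : Hd d A q →L[ℂ] Hd d A q) (𝒜 𝒩 : Set (Fin d → ℤ)) :
    LocalAt G 𝒜 𝒩 ↔
      ∀ B : Hd d A q →L[ℂ] Hd d A q, Localized B 𝒜 →
        Localized ((ContinuousLinearMap.adjoint G).comp (B.comp G)) (𝒜 + 𝒩) :=
  ⟨fun hG _ ⟨_, hB⟩ => (isLocalizedWith_adjoint_conj hG hB).localized,
    fun hG _ _ => redApply_eq_of_reduct_eq hG⟩

/-- locality at `𝒜` with neighbourhood `𝒩` (condition (i)) is equivalent to: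
for every bounded operator `B` localized in `𝒜`, `G† B G` is localized in `𝒜 + 𝒩`. -/
theorem localAt_iff_adjoint_conj_localized
    {d : ℕ} (hd : 0 < d) {A : Type} [Fintype A] {q : A}
    (G : Hd d A q →L[ℂ] Hd d A q) (𝒜 𝒩 : Set (Fin d → ℤ)) (h𝒩 : 𝒩.Finite) :
    LocalAt G 𝒜 𝒩 ↔
      ∀ B : Hd d A q →L[ℂ] Hd d A q, Localized B 𝒜 →
        Localized ((ContinuousLinearMap.adjoint G).comp (B.comp G)) (𝒜 + 𝒩) :=
  localAt_iff_adjoint_conj_localized_general G 𝒜 𝒩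

end
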